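/- arXiv:2010.04347 — 8 statements merged into one kernel-verified Lean document; each statement's English description precedes it below -/
import Mathlib

section
/- Let f be a real-valued function that is positive and differentiable on an open interval (a,b), and let g be a differentiable function on (a,b) with g(x) ≠ 0 for all x in (a,b). If for every x in (a,b) the truncated-moment identity ∫_a^x t·f(t) dt = g(x)·f(x) holds (with t·f(t) integrable near a), then for every x in (a,b) the density satisfies the differential equation f'(x)/f(x) = (x − g'(x))/g(x). -/
/-! Differentiating the moment identity, by the fundamental theorem of calculus on the left and
the product rule on the right, gives `x f = g' f + g f'`, which rearranges to the equation. -/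

open MeasureTheory

theorem hasDerivAt_of_forall_integral_eq {E : Type*} [NormedAddCommGroup E] [NormedSpace ℝ E]
    [CompleteSpace E] {φ G : ℝ → E} {a x : ℝ} {s : Set ℝ} (hs : IsOpen s) (hx : x ∈ s)
    (hφ : ContinuousOn φ s) (hint : IntervalIntegrable φ volume a x)
    (hG : ∀ y ∈ s, ∫ t in a..y, φ t = G y) :
    HasDerivAt G (φ x) x := by
  have hderiv : HasDerivAt (fun y => ∫ t in a..y, φ t) (φ x) x :=
    intervalIntegral.integral_hasDerivAt_right hint (hφ.stronglyMeasurableAtFilter hs x hx)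
      (hφ.continuousAt (hs.mem_nhds hx))
  exact hderiv.congr_of_eventuallyEq (Filter.eventuallyEq_of_mem (hs.mem_nhds hx) hG).symm

theorem lemma1_diff_eq_general (a b : ℝ) (f g : ℝ → ℝ)
    (hf_pos : ∀ x ∈ Set.Ioo a b, 0 < f x)
    (hf_diff : ∀ x ∈ Set.Ioo a b, DifferentiableAt ℝ f x)
    (hg_diff : ∀ x ∈ Set.Ioo a b, DifferentiableAt ℝ g x)
    (hg_ne : ∀ x ∈ Set.Ioo a b, g x ≠ 0)
    (hint : ∀ x ∈ Set.Ioo a b,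
      IntervalIntegrable (fun t => t * f t) MeasureTheory.volume a x)
    (hid : ∀ x ∈ Set.Ioo a b, (∫ t in a..x, t * f t) = g x * f x) :
    ∀ x ∈ Set.Ioo a b, deriv f x / f x = (x - deriv g x) / g x := by
  intro x hx
  have hcont : ContinuousOn (fun t => t * f t) (Set.Ioo a b) := fun t ht =>
    (continuousAt_id.mul (hf_diff t ht).continuousAt).continuousWithinAt
  have hmoment : HasDerivAt (fun y => g y * f y) (x * f x) x :=
    hasDerivAt_of_forall_integral_eq isOpen_Ioo hx hcont (hint x hx) hid
  have hproduct : HasDerivAt (fun y => g y * f y) (deriv g x * f x + g x * deriv f x) x :=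
    (hg_diff x hx).hasDerivAt.mul (hf_diff x hx).hasDerivAt
  have hkey : x * f x = deriv g x * f x + g x * deriv f x := hmoment.unique hproduct
  rw [div_eq_div_iff (hf_pos x hx).ne' (hg_ne x hx)]
  linear_combination -hkey

/-- **Lemma 1 (differential-equation form).**
If `f` is positive and differentiable on `(a, b)`, `g` is differentiable and nonvanishing
on `(a, b)`, and the left-truncated first-moment identity
`∫ t in a..x, t * f t = g x * f x` holds on `(a, b)` (with `t * f t` integrable near `a`),
then `f' x / f x = (x - g' x) / g x` on `(a, b)`. -/
theorem lemma1_diff_eq (a b : ℝ) (hab : a < b) (f g : ℝ → ℝ)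
    (hf_pos : ∀ x ∈ Set.Ioo a b, 0 < f x)
    (hf_diff : ∀ x ∈ Set.Ioo a b, DifferentiableAt ℝ f x)
    (hg_diff : ∀ x ∈ Set.Ioo a b, DifferentiableAt ℝ g x)
    (hg_ne : ∀ x ∈ Set.Ioo a b, g x ≠ 0)
    (hint : ∀ x ∈ Set.Ioo a b,
      IntervalIntegrable (fun t => t * f t) MeasureTheory.volume a x)
    (hid : ∀ x ∈ Set.Ioo a b, (∫ t in a..x, t * f t) = g x * f x) :
    ∀ x ∈ Set.Ioo a b, deriv f x / f x = (x - deriv g x) / g x :=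
  lemma1_diff_eq_general a b f g hf_pos hf_diff hg_diff hg_ne hint hid
end

section
/- Let f be a real-valued function that is positive and differentiable on an open interval (a,b), and let h be a differentiable function on (a,b) with h(x) ≠ 0 for all x in (a,b). If for every x in (a,b) the truncated-moment identity ∫_x^b t·f(t) dt = h(x)·f(x) holds (with t·f(t) integrable near b), then for every x in (a,b) the density satisfies the differential equation f'(x)/f(x) = −(x + h'(x))/h(x). -/
/-! Differentiating `∫ t in x..b, t * f t = h x * f x` gives `-x f = h' f + h f'` by the
fundamental theorem of calculus and the product rule; dividing by `h f` gives the equation. -/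

open Filter Topology MeasureTheory

theorem intervalIntegral.hasDerivAt_integral_left_of_continuousOn {g : ℝ → ℝ} {U : Set ℝ}
    {x b : ℝ} (hU : IsOpen U) (hx : x ∈ U) (hg : ContinuousOn g U)
    (hint : IntervalIntegrable g volume x b) :
    HasDerivAt (fun u => ∫ t in u..b, g t) (-g x) x :=
  integral_hasDerivAt_left hint
    (ContinuousAt.stronglyMeasurableAtFilter hU (fun _ hu => hg.continuousAt (hU.mem_nhds hu)) x hx)
    (hg.continuousAt (hU.mem_nhds hx))

theorem deriv_div_eq_of_hasDerivAt_mul_eq_neg_mul {f h : ℝ → ℝ} {x c : ℝ}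
    (hf : DifferentiableAt ℝ f x) (hh : DifferentiableAt ℝ h x) (hfx : f x ≠ 0) (hhx : h x ≠ 0)
    (hprod : HasDerivAt (fun u => h u * f u) (-(c * f x)) x) :
    deriv f x / f x = -(c + deriv h x) / h x := by
  have hproduct_rule : -(c * f x) = deriv h x * f x + h x * deriv f x :=
    hprod.unique (hh.hasDerivAt.mul hf.hasDerivAt)
  field_simp
  linarith

theorem lemma2_diff_eq_general (a b : ℝ) (f h : ℝ → ℝ)
    (hf_pos : ∀ x ∈ Set.Ioo a b, 0 < f x)
    (hf_diff : ∀ x ∈ Set.Ioo a b, DifferentiableAt ℝ f x)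
    (hh_diff : ∀ x ∈ Set.Ioo a b, DifferentiableAt ℝ h x)
    (hh_ne : ∀ x ∈ Set.Ioo a b, h x ≠ 0)
    (hint : ∀ x ∈ Set.Ioo a b,
      IntervalIntegrable (fun t => t * f t) MeasureTheory.volume x b)
    (hid : ∀ x ∈ Set.Ioo a b, (∫ t in x..b, t * f t) = h x * f x) :
    ∀ x ∈ Set.Ioo a b, deriv f x / f x = -(x + deriv h x) / h x := by
  intro x hx
  have hmoment_cont : ContinuousOn (fun t => t * f t) (Set.Ioo a b) :=
    continuousOn_id.mul fun u hu => (hf_diff u hu).continuousAt.continuousWithinAt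
  have htail : HasDerivAt (fun u => ∫ t in u..b, t * f t) (-(x * f x)) x :=
    intervalIntegral.hasDerivAt_integral_left_of_continuousOn isOpen_Ioo hx hmoment_cont
      (hint x hx)
  have hprod : HasDerivAt (fun u => h u * f u) (-(x * f x)) x :=
    htail.congr_of_eventuallyEq <| eventually_of_mem (isOpen_Ioo.mem_nhds hx) fun u hu =>
      (hid u hu).symm
  exact deriv_div_eq_of_hasDerivAt_mul_eq_neg_mul (hf_diff x hx) (hh_diff x hx)
    (hf_pos x hx).ne' (hh_ne x hx) hprod

/-- **Lemma 2 (differential-equation form).**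
If `f` is positive and differentiable on `(a, b)`, `h` is differentiable and nonvanishing
on `(a, b)`, and the right-truncated first-moment identity
`∫ t in x..b, t * f t = h x * f x` holds on `(a, b)` (with `t * f t` integrable near `b`),
then `f' x / f x = -(x + h' x) / h x` on `(a, b)`. -/
theorem lemma2_diff_eq (a b : ℝ) (hab : a < b) (f h : ℝ → ℝ)
    (hf_pos : ∀ x ∈ Set.Ioo a b, 0 < f x)
    (hf_diff : ∀ x ∈ Set.Ioo a b, DifferentiableAt ℝ f x)
    (hh_diff : ∀ x ∈ Set.Ioo a b, DifferentiableAt ℝ h x)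
    (hh_ne : ∀ x ∈ Set.Ioo a b, h x ≠ 0)
    (hint : ∀ x ∈ Set.Ioo a b,
      IntervalIntegrable (fun t => t * f t) MeasureTheory.volume x b)
    (hid : ∀ x ∈ Set.Ioo a b, (∫ t in x..b, t * f t) = h x * f x) :
    ∀ x ∈ Set.Ioo a b, deriv f x / f x = -(x + deriv h x) / h x :=
  lemma2_diff_eq_general a b f h hf_pos hf_diff hh_diff hh_ne hint hid
end

section
/- Let α > 0 and β > 0, and let f(x) = αβ·exp(−α(x^{−β} − 1))/x^{1+β} for x ∈ (0,1). Then for every x ∈ (0,1], the truncated first moment satisfies ∫_0^x t·f(t) dt = e^α · α^{1/β} · Γ(1 − 1/β; α/x^β), where Γ(s; y) = ∫_y^∞ t^{s−1} e^{−t} dt is the upper incomplete gamma function. -/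
/-!
The substitution `u = α t^(-β)` maps `(0, x)` decreasingly onto `(α / x^β, ∞)` with
`|du| = α β t^(-β-1) dt`, and since `t = α^(1/β) u^(-1/β)` it turns `t f(t) dt` into
`e^α α^(1/β) u^(-1/β) e^(-u) du`.
-/

/-- The upper incomplete gamma function `Γ(s; y) = ∫_y^∞ t^(s-1) e^(-t) dt`. -/
noncomputable def uiGamma (s y : ℝ) : ℝ :=
  ∫ t in Set.Ioi y, t ^ (s - 1) * Real.exp (-t)

open Set MeasureTheory Real

theorem image_rpow_Ioo_zero_of_neg {p x : ℝ} (hp : p < 0) (hx : 0 < x) :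
    (· ^ p) '' Ioo 0 x = Ioi (x ^ p) := by
  ext u
  constructor
  · rintro ⟨t, ⟨ht0, htx⟩, rfl⟩
    exact rpow_lt_rpow_of_neg ht0 htx hp
  · intro hu
    have hu0 : 0 < u := (rpow_pos_of_pos hx p).trans hu
    refine ⟨u ^ p⁻¹, ⟨rpow_pos_of_pos hu0 _, ?_⟩, rpow_inv_rpow hu0.le hp.ne⟩
    exact (rpow_inv_lt_iff_of_neg hu0 hx hp).2 hu

theorem integral_Ioi_div_rpow_eq_integral_Ioo {E : Type*} [NormedAddCommGroup E]
    [NormedSpace ℝ E] {c β x : ℝ} (hc : 0 < c) (hβ : 0 < β) (hx : 0 < x) (g : ℝ → E) :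
    ∫ u in Ioi (c / x ^ β), g u =
      ∫ t in Ioo 0 x, (c * β * t ^ (-β - 1)) • g (c * t ^ (-β)) := by
  have himage : (fun t => c * t ^ (-β)) '' Ioo 0 x = Ioi (c / x ^ β) := by
    rw [← image_image (c * ·) (· ^ (-β)), image_rpow_Ioo_zero_of_neg (neg_neg_of_pos hβ) hx,
      image_mul_left_Ioi hc, rpow_neg hx.le, div_eq_mul_inv]
  have hderiv : ∀ t ∈ Ioo 0 x,
      HasDerivWithinAt (fun t => c * t ^ (-β)) (c * (-β * t ^ (-β - 1))) (Ioo 0 x) t :=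
    fun t ht => ((hasDerivAt_rpow_const (Or.inl ht.1.ne')).const_mul c).hasDerivWithinAt
  have hinj : InjOn (fun t => c * t ^ (-β)) (Ioo 0 x) :=
    (mul_right_injective₀ hc.ne').comp_injOn
      ((strictAntiOn_rpow_Ioi_of_exponent_neg (neg_neg_of_pos hβ)).injOn.mono Ioo_subset_Ioi_self)
  rw [← himage, integral_image_eq_integral_abs_deriv_smul measurableSet_Ioo hderiv hinj]
  refine setIntegral_congr_fun measurableSet_Ioo fun t ht => ?_
  rw [abs_mul, abs_mul, abs_neg, abs_of_pos hc, abs_of_pos hβ,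
    abs_of_pos (rpow_pos_of_pos ht.1 _), mul_assoc]

theorem mul_rpow_rpow_neg_inv {α β t : ℝ} (hα : 0 ≤ α) (hβ : β ≠ 0) (ht : 0 < t) :
    (α * t ^ (-β)) ^ (-β⁻¹) = (α ^ β⁻¹)⁻¹ * t := by
  rw [mul_rpow hα (rpow_nonneg ht.le _), ← rpow_mul ht.le, neg_mul_neg, mul_inv_cancel₀ hβ,
    rpow_one, rpow_neg hα]

theorem mul_unitGompertz_density_eq {α β t : ℝ} (hα : 0 < α) (hβ : β ≠ 0) (ht : 0 < t) :
    t * (α * β * exp (-α * (t ^ (-β) - 1)) / t ^ (1 + β)) =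
      exp α * α ^ (1 / β) * ((α * β * t ^ (-β - 1)) *
        ((α * t ^ (-β)) ^ (1 - 1 / β - 1) * exp (-(α * t ^ (-β))))) := by
  have hexp : exp (-α * (t ^ (-β) - 1)) = exp α * exp (-(α * t ^ (-β))) := by
    rw [← exp_add]; ring_nf
  rw [show (1 - 1 / β - 1 : ℝ) = -β⁻¹ by ring, one_div, mul_rpow_rpow_neg_inv hα.le hβ ht, hexp,
    rpow_sub ht, rpow_add ht, rpow_one, rpow_neg ht.le]
  have : 0 < α ^ β⁻¹ := rpow_pos_of_pos hα _
  have : 0 < t ^ β := rpow_pos_of_pos ht _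
  field_simp

/-- **Truncated first moment of the unit-Gompertz distribution.**
For `α, β > 0` and the unit-Gompertz density
`f x = α * β * exp (-α * (x ^ (-β) - 1)) / x ^ (1 + β)` on `(0, 1)`, for every
`x ∈ (0, 1]` one has
`∫ t in 0..x, t * f t = e^α * α^(1/β) * Γ(1 - 1/β; α / x^β)`. -/
theorem unitGompertz_truncated_first_moment (α β : ℝ) (hα : 0 < α) (hβ : 0 < β)
    (f : ℝ → ℝ)
    (hf : f = fun x => α * β * Real.exp (-α * (x ^ (-β) - 1)) / x ^ (1 + β)) :
    ∀ x ∈ Set.Ioc (0:ℝ) 1,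
      (∫ t in (0:ℝ)..x, t * f t) =
        Real.exp α * α ^ (1 / β) * uiGamma (1 - 1 / β) (α / x ^ β) := by
  rintro x ⟨hx, -⟩
  rw [uiGamma, integral_Ioi_div_rpow_eq_integral_Ioo hα hβ hx, ← integral_const_mul,
    intervalIntegral.integral_of_le hx.le, integral_Ioc_eq_integral_Ioo]
  refine setIntegral_congr_fun measurableSet_Ioo fun t ht => ?_
  rw [hf, smul_eq_mul, mul_unitGompertz_density_eq hα hβ.ne' ht.1]
end

section
/- Let α > 0 and β > 0, and let f(x) = αβ·exp(−α(x^{−β} − 1))/x^{1+β} for x ∈ (0,1). Define g(x) = (α^{1/β}/(αβ))·exp(α/x^β)·x^{1+β}·Γ(1 − 1/β; α/x^β). Then for every x ∈ (0,1), ∫_0^x t·f(t) dt = g(x)·f(x); equivalently, with F(x) = exp(−α(x^{−β} − 1)), the conditional expectation satisfies E(X | X ≤ x) = g(x)·f(x)/F(x) when X has density f. -/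
open Real Set MeasureTheory

lemma image_const_mul_rpow_neg_Ioo {c β x : ℝ} (hc : 0 < c) (hβ : 0 < β) (hx : 0 < x) :
    (fun t => c * t ^ (-β)) '' Ioo 0 x = Ioi (c * x ^ (-β)) := by
  ext u
  constructor
  · rintro ⟨t, ⟨ht0, htx⟩, rfl⟩
    exact mul_lt_mul_of_pos_left (rpow_lt_rpow_of_neg ht0 htx (neg_neg_of_pos hβ)) hc
  · intro hu
    have hu0 : 0 < u := (by positivity : 0 < c * x ^ (-β)).trans hu
    have hxu : x ^ (-β) < u / c := (lt_div_iff₀' hc).2 hu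
    refine ⟨(u / c) ^ (-β⁻¹), ⟨by positivity, ?_⟩, ?_⟩
    · calc (u / c) ^ (-β⁻¹) < (x ^ (-β)) ^ (-β⁻¹) :=
            rpow_lt_rpow_of_neg (by positivity) hxu (by simpa using hβ)
        _ = x := by rw [← rpow_mul hx.le, neg_mul_neg, mul_inv_cancel₀ hβ.ne', rpow_one]
    · change c * ((u / c) ^ (-β⁻¹)) ^ (-β) = u
      rw [← rpow_mul (by positivity), neg_mul_neg, inv_mul_cancel₀ hβ.ne', rpow_one]
      field_simp

lemma uiGamma_const_mul_rpow_neg (s : ℝ) {c β x : ℝ} (hc : 0 < c) (hβ : 0 < β) (hx : 0 < x) :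
    uiGamma s (c * x ^ (-β)) =
      c ^ s * β * ∫ t in Ioo 0 x, t ^ (-β * s - 1) * exp (-(c * t ^ (-β))) := by
  have hderiv : ∀ t ∈ Ioo 0 x, HasDerivWithinAt (fun t => c * t ^ (-β))
      (c * (-β * t ^ (-β - 1))) (Ioo 0 x) t := fun t ht =>
    ((hasDerivAt_rpow_const (Or.inl ht.1.ne')).const_mul c).hasDerivWithinAt
  have hinj : InjOn (fun t => c * t ^ (-β)) (Ioo 0 x) :=
    fun a ha b hb hab => (strictAntiOn_rpow_Ioi_of_exponent_neg (neg_neg_of_pos hβ)).injOn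
      (Ioo_subset_Ioi_self ha) (Ioo_subset_Ioi_self hb) (mul_left_cancel₀ hc.ne' hab)
  rw [uiGamma, ← image_const_mul_rpow_neg_Ioo hc hβ hx,
    integral_image_eq_integral_abs_deriv_smul measurableSet_Ioo hderiv hinj, ← integral_const_mul]
  refine setIntegral_congr_fun measurableSet_Ioo fun t ⟨ht, _⟩ => ?_
  have habs : |c * (-β * t ^ (-β - 1))| = c * β * t ^ (-β - 1) := by
    rw [show c * (-β * t ^ (-β - 1)) = -(c * β * t ^ (-β - 1)) by ring, abs_neg,
      abs_of_pos (by positivity)]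
  have hpow : c * (c * t ^ (-β)) ^ (s - 1) * t ^ (-β - 1) = c ^ s * t ^ (-β * s - 1) := by
    have hcs : c ^ s = c ^ (s - 1) * c := by rw [← rpow_add_one hc.ne', sub_add_cancel]
    have hts : t ^ (-β * s - 1) = t ^ (-β * (s - 1)) * t ^ (-β - 1) := by
      rw [← rpow_add ht]; ring_nf
    rw [mul_rpow hc.le (by positivity), ← rpow_mul ht.le, hcs, hts]
    ring
  rw [smul_eq_mul, habs]
  linear_combination β * exp (-(c * t ^ (-β))) * hpow

lemma mul_unitGompertz_density {α β t : ℝ} (ht : 0 < t) :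
    t * (α * β * exp (-α * (t ^ (-β) - 1)) / t ^ (1 + β)) =
      α * β * exp α * (t ^ (-β) * exp (-(α * t ^ (-β)))) := by
  have hexp : exp (-α * (t ^ (-β) - 1)) = exp (-(α * t ^ (-β))) * exp α := by
    rw [← exp_add]; ring_nf
  rw [hexp, rpow_add ht, rpow_one, rpow_neg ht.le]
  field_simp

lemma intervalIntegral_mul_unitGompertz_density {α β x : ℝ} (hα : 0 < α) (hβ : 0 < β)
    (hx : 0 < x) :
    ∫ t in 0..x, t * (α * β * exp (-α * (t ^ (-β) - 1)) / t ^ (1 + β)) =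
      exp α * α ^ (1 / β) * uiGamma (1 - 1 / β) (α / x ^ β) := by
  have hexponent : -β * (1 - 1 / β) - 1 = -β := by field_simp; ring
  have hα_pow : α ^ (1 - 1 / β) * α ^ (1 / β) = α := by
    rw [← rpow_add hα, sub_add_cancel, rpow_one]
  have hy : α / x ^ β = α * x ^ (-β) := by rw [rpow_neg hx.le, div_eq_mul_inv]
  rw [hy, uiGamma_const_mul_rpow_neg _ hα hβ hx, hexponent,
    intervalIntegral.integral_of_le hx.le, integral_Ioc_eq_integral_Ioo,
    setIntegral_congr_fun measurableSet_Ioo fun t ht => mul_unitGompertz_density ht.1,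
    integral_const_mul]
  linear_combination -(β * exp α * ∫ t in Ioo 0 x, t ^ (-β) * exp (-(α * t ^ (-β)))) * hα_pow

theorem unitGompertz_left_truncated_identity_general (α β : ℝ) (hα : 0 < α) (hβ : 0 < β)
    (f g F : ℝ → ℝ)
    (hf : f = fun x => α * β * Real.exp (-α * (x ^ (-β) - 1)) / x ^ (1 + β))
    (hg : g = fun x => α ^ (1 / β) / (α * β) * Real.exp (α / x ^ β) * x ^ (1 + β) *
      uiGamma (1 - 1 / β) (α / x ^ β)) :
    ∀ x ∈ Set.Ioo (0:ℝ) 1,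
      (∫ t in (0:ℝ)..x, t * f t) = g x * f x ∧
      (∫ t in (0:ℝ)..x, t * f t) / F x = g x * f x / F x := by
  intro x ⟨hx, _⟩
  have hexp : exp (α / x ^ β) * exp (-α * (x ^ (-β) - 1)) = exp α := by
    rw [← exp_add, rpow_neg hx.le]
    congr 1
    field_simp
    ring
  have hidentity : ∫ t in (0:ℝ)..x, t * f t = g x * f x := by
    subst hf hg
    rw [intervalIntegral_mul_unitGompertz_density hα hβ hx, ← hexp]
    field_simp
  exact ⟨hidentity, by rw [hidentity]⟩

/-- **Theorem 1, direct part.** For `α, β > 0`, the unit-Gompertz density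
`f x = α * β * exp (-α * (x ^ (-β) - 1)) / x ^ (1 + β)` and the function
`g x = (α^(1/β) / (α * β)) * exp (α / x^β) * x^(1+β) * Γ(1 - 1/β; α / x^β)`
satisfy `∫ t in 0..x, t * f t = g x * f x` for every `x ∈ (0, 1)`; equivalently,
with `F x = exp (-α * (x ^ (-β) - 1))`, the conditional expectation satisfies
`E(X | X ≤ x) = g x * f x / F x`. -/
theorem unitGompertz_left_truncated_identity (α β : ℝ) (hα : 0 < α) (hβ : 0 < β)
    (f g F : ℝ → ℝ)
    (hf : f = fun x => α * β * Real.exp (-α * (x ^ (-β) - 1)) / x ^ (1 + β))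
    (hg : g = fun x => α ^ (1 / β) / (α * β) * Real.exp (α / x ^ β) * x ^ (1 + β) *
      uiGamma (1 - 1 / β) (α / x ^ β))
    (hF : F = fun x => Real.exp (-α * (x ^ (-β) - 1))) :
    ∀ x ∈ Set.Ioo (0:ℝ) 1,
      (∫ t in (0:ℝ)..x, t * f t) = g x * f x ∧
      (∫ t in (0:ℝ)..x, t * f t) / F x = g x * f x / F x :=
  unitGompertz_left_truncated_identity_general α β hα hβ f g F hf hg
end

section
/- Let α > 0 and β > 0, and define g(x) = (α^{1/β}/(αβ))·exp(α/x^β)·x^{1+β}·Γ(1 − 1/β; α/x^β) for x ∈ (0,1), where Γ(s; y) = ∫_y^∞ t^{s−1} e^{−t} dt. Then g is differentiable on (0,1) and for every x ∈ (0,1), g'(x) = x − g(x)·(αβ/x^{β+1} − (β+1)/x). -/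
/-!
With `u x = α / x ^ β` and `s = 1 - 1/β`, write `g x = C * x ^ (1 + β) * F (u x)` where
`F y = exp y * Γ(s; y)`. The fundamental theorem of calculus gives `F' = F - y ^ (s - 1)`,
and since `x ^ (1 + β) * u' x = -α * β`, the chain rule yields
`g' = ((1 + β) / x - α * β / x ^ (β + 1)) * g + C * α * β * u ^ (-1/β)`.
The choice of `C = α ^ (1/β) / (α * β)` makes the last term exactly `x`.
-/

open Set MeasureTheory Real Filter

lemma integrableOn_rpow_mul_exp_neg_Ioi (s : ℝ) {c : ℝ} (hc : 0 < c) :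
    IntegrableOn (fun t : ℝ => t ^ s * exp (-t)) (Ioi c) :=
  integrable_of_isBigO_exp_neg one_half_pos
    ((continuousOn_id.rpow_const fun _ ht => Or.inl (hc.trans_le ht).ne').mul
      continuousOn_id.neg.rexp)
    ((Gamma_integrand_isLittleO s).isBigO.congr_left fun _ => mul_comm _ _)

lemma hasDerivAt_uiGamma (s : ℝ) {y : ℝ} (hy : 0 < y) :
    HasDerivAt (uiGamma s) (-(y ^ (s - 1) * exp (-y))) y := by
  have hc : 0 < y / 2 := half_pos hy
  have hint := integrableOn_rpow_mul_exp_neg_Ioi (s - 1) hc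
  have hcont : ContinuousOn (fun t : ℝ => t ^ (s - 1) * exp (-t)) (Ioi 0) :=
    (continuousOn_id.rpow_const fun _ ht => Or.inl (ne_of_gt ht)).mul continuousOn_id.neg.rexp
  have hFTC : HasDerivAt (fun z => uiGamma s (y / 2) - ∫ t in y / 2..z, t ^ (s - 1) * exp (-t))
      (-(y ^ (s - 1) * exp (-y))) y :=
    (intervalIntegral.integral_hasDerivAt_right
      ((intervalIntegrable_iff_integrableOn_Ioc_of_le (half_le_self hy.le)).2
        (hint.mono_set Ioc_subset_Ioi_self))
      (hcont.stronglyMeasurableAtFilter isOpen_Ioi y hy)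
      (hcont.continuousAt (Ioi_mem_nhds hy))).const_sub _
  refine hFTC.congr_of_eventuallyEq ?_
  filter_upwards [eventually_gt_nhds (half_lt_self hy)] with z hz
  rw [uiGamma, uiGamma, ← intervalIntegral.integral_Ioi_sub_Ioi hint hz.le, sub_sub_cancel]

lemma hasDerivAt_exp_mul_uiGamma (s : ℝ) {y : ℝ} (hy : 0 < y) :
    HasDerivAt (fun y => exp y * uiGamma s y) (exp y * uiGamma s y - y ^ (s - 1)) y := by
  refine ((hasDerivAt_exp y).mul (hasDerivAt_uiGamma s hy)).congr_deriv ?_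
  rw [mul_neg, mul_left_comm, ← exp_add, add_neg_cancel, exp_zero, mul_one]
  ring

lemma hasDerivAt_const_div_rpow (a : ℝ) {b x : ℝ} (hx : 0 < x) :
    HasDerivAt (fun x => a / x ^ b) (-(a * b / x ^ (b + 1))) x := by
  refine ((hasDerivAt_const x a).div (hasDerivAt_rpow_const (Or.inl hx.ne'))
    (rpow_pos_of_pos hx b).ne').congr_deriv ?_
  rw [rpow_add hx, rpow_sub hx, rpow_one]
  field_simp
  ring

lemma div_rpow_rpow_neg_inv {a x : ℝ} (ha : 0 ≤ a) (hx : 0 ≤ x) {b : ℝ} (hb : b ≠ 0) :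
    (a / x ^ b) ^ (-(1 / b)) = x / a ^ (1 / b) := by
  rw [div_rpow ha (rpow_nonneg hx b), ← rpow_mul hx, rpow_neg ha, mul_neg, mul_one_div_cancel hb,
    rpow_neg_one, div_inv_eq_mul, inv_mul_eq_div]

/-- **Derivative of `g` in Theorem 1.** For `α, β > 0`, the function
`g x = (α^(1/β) / (α * β)) * exp (α / x^β) * x^(1+β) * Γ(1 - 1/β; α / x^β)`
is differentiable on `(0, 1)` with
`g' x = x - g x * (α * β / x^(β+1) - (β+1) / x)`. -/
theorem unitGompertz_g_hasDerivAt (α β : ℝ) (hα : 0 < α) (hβ : 0 < β)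
    (g : ℝ → ℝ)
    (hg : g = fun x => α ^ (1 / β) / (α * β) * Real.exp (α / x ^ β) * x ^ (1 + β) *
      uiGamma (1 - 1 / β) (α / x ^ β)) :
    ∀ x ∈ Set.Ioo (0:ℝ) 1,
      HasDerivAt g (x - g x * (α * β / x ^ (β + 1) - (β + 1) / x)) x := by
  rintro x ⟨hx, -⟩
  set C := α ^ (1 / β) / (α * β)
  set F := fun y => exp y * uiGamma (1 - 1 / β) y
  have hu : 0 < α / x ^ β := div_pos hα (rpow_pos_of_pos hx β)
  have hD : HasDerivAt (fun x => C * (x ^ (1 + β) * F (α / x ^ β)))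
      (C * ((1 + β) * x ^ (1 + β - 1) * F (α / x ^ β) + x ^ (1 + β) *
        ((F (α / x ^ β) - (α / x ^ β) ^ (1 - 1 / β - 1)) * -(α * β / x ^ (β + 1))))) x :=
    ((hasDerivAt_rpow_const (Or.inl hx.ne')).mul
      ((hasDerivAt_exp_mul_uiGamma (1 - 1 / β) hu).comp x
        (hasDerivAt_const_div_rpow α hx))).const_mul C
  have hg' : g = fun x => C * (x ^ (1 + β) * F (α / x ^ β)) := by
    rw [hg]; ext x; simp only [F]; ring
  subst hg'
  refine hD.congr_deriv ?_
  beta_reduce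
  rw [add_sub_cancel_left, sub_sub_cancel_left, div_rpow_rpow_neg_inv hα.le hx.le hβ.ne',
    add_comm 1 β, rpow_add_one hx.ne']
  simp only [C]
  field_simp
  ring
end

section
/- Let α > 0, β > 0, and let r be a nonnegative integer. Let f(x) = αβ·exp(−α(x^{−β} − 1))/x^{1+β} and F(x) = exp(−α(x^{−β} − 1)) for x ∈ (0,1). Then the r-th probability weighted moment satisfies β_r := ∫_0^1 x·[F(x)]^r·f(x) dx = α^{1/β}·(r+1)^{1/β − 1}·e^{(r+1)α}·Γ(1 − 1/β; (r+1)α), where Γ(s; y) = ∫_y^∞ t^{s−1} e^{−t} dt is the upper incomplete gamma function. -/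
open Set MeasureTheory Real

section Substitution

variable {β c : ℝ}

lemma image_mul_rpow_neg_Ioo (hβ : 0 < β) (hc : 0 < c) :
    (fun x : ℝ => c * x ^ (-β)) '' Ioo 0 1 = Ioi c := by
  ext t
  constructor
  · rintro ⟨x, ⟨hx0, hx1⟩, rfl⟩
    have : 1 < x ^ (-β) := one_lt_rpow_of_pos_of_lt_one_of_neg hx0 hx1 (neg_lt_zero.2 hβ)
    show c < c * x ^ (-β)
    nlinarith
  · intro (ht : c < t)
    have htc : 1 < t / c := (one_lt_div hc).2 ht
    refine ⟨(t / c) ^ (-β)⁻¹, ⟨by positivity, ?_⟩, ?_⟩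
    · exact rpow_lt_one_of_one_lt_of_neg htc (by simpa using hβ)
    · dsimp only
      rw [rpow_inv_rpow (by positivity) (by simpa using hβ.ne')]
      field_simp

lemma injOn_mul_rpow_neg (hβ : 0 < β) (hc : 0 < c) :
    InjOn (fun x : ℝ => c * x ^ (-β)) (Ioi 0) := fun _ hx _ hy hxy =>
  (strictAntiOn_rpow_Ioi_of_exponent_neg (neg_lt_zero.2 hβ)).injOn hx hy
    (mul_left_cancel₀ hc.ne' hxy)

lemma uiGamma_eq_integral_Ioo (s : ℝ) (hβ : 0 < β) (hc : 0 < c) :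
    uiGamma s c = β * c ^ s * ∫ x in Ioo 0 1, x ^ (-β * s - 1) * exp (-(c * x ^ (-β))) := by
  have hderiv : ∀ x ∈ Ioo (0 : ℝ) 1,
      HasDerivWithinAt (fun x => c * x ^ (-β)) (c * (-β * x ^ (-β - 1))) (Ioo 0 1) x :=
    fun x hx => ((hasDerivAt_rpow_const (Or.inl hx.1.ne')).const_mul c).hasDerivWithinAt
  rw [uiGamma, ← image_mul_rpow_neg_Ioo hβ hc,
    integral_image_eq_integral_abs_deriv_smul measurableSet_Ioo hderiv
      ((injOn_mul_rpow_neg hβ hc).mono Ioo_subset_Ioi_self),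
    ← integral_const_mul]
  refine setIntegral_congr_fun measurableSet_Ioo fun x ⟨hx, _⟩ => ?_
  have habs : |c * (-β * x ^ (-β - 1))| = c * β * x ^ (-β - 1) := by
    rw [abs_mul, abs_mul, abs_neg, abs_of_pos hc, abs_of_pos hβ,
      abs_of_pos (rpow_pos_of_pos hx _), mul_assoc]
  have hpow : c * x ^ (-β - 1) * (c * x ^ (-β)) ^ (s - 1) = c ^ s * x ^ (-β * s - 1) := by
    calc c * x ^ (-β - 1) * (c * x ^ (-β)) ^ (s - 1)
        = c ^ s * (x ^ (-β - 1) * x ^ (-β * (s - 1))) := by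
          rw [mul_rpow hc.le (rpow_pos_of_pos hx _).le, ← rpow_mul hx.le, rpow_sub_one hc.ne']
          field_simp
      _ = c ^ s * x ^ (-β * s - 1) := by rw [← rpow_add hx]; ring_nf
  rw [smul_eq_mul, habs]
  linear_combination β * exp (-(c * x ^ (-β))) * hpow

end Substitution

lemma unitGompertz_integrand_eq {α β x : ℝ} (hx : 0 < x) (r : ℕ) :
    x * exp (-α * (x ^ (-β) - 1)) ^ r * (α * β * exp (-α * (x ^ (-β) - 1)) / x ^ (1 + β)) =
      α * β * exp ((r + 1) * α) * (x ^ (-β) * exp (-((r + 1) * α * x ^ (-β)))) := by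
  have hdiv : x / x ^ (1 + β) = x ^ (-β) := by
    rw [rpow_add hx, rpow_one, rpow_neg hx.le]
    field_simp
  calc x * exp (-α * (x ^ (-β) - 1)) ^ r * (α * β * exp (-α * (x ^ (-β) - 1)) / x ^ (1 + β))
      = α * β * (x / x ^ (1 + β)) * exp ((r + 1) * (-α * (x ^ (-β) - 1))) := by
        rw [add_one_mul, exp_add, exp_nat_mul]; ring
    _ = α * β * exp ((r + 1) * α) * (x ^ (-β) * exp (-((r + 1) * α * x ^ (-β)))) := by
        rw [hdiv, show (r + 1) * (-α * (x ^ (-β) - 1)) = (r + 1) * α + -((r + 1) * α * x ^ (-β))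
          by ring, exp_add]
        ring

/-- **Probability weighted moments of the unit-Gompertz distribution.**
For `α, β > 0` and `r : ℕ`, with density
`f x = α * β * exp (-α * (x ^ (-β) - 1)) / x ^ (1 + β)` and cdf
`F x = exp (-α * (x ^ (-β) - 1))`, the `r`-th probability weighted moment is
`β_r = ∫_0^1 x * (F x)^r * f x dx
     = α^(1/β) * (r+1)^(1/β - 1) * e^((r+1)α) * Γ(1 - 1/β; (r+1)α)`. -/
theorem unitGompertz_pwm (α β : ℝ) (hα : 0 < α) (hβ : 0 < β) (r : ℕ)
    (f F : ℝ → ℝ)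
    (hf : f = fun x => α * β * Real.exp (-α * (x ^ (-β) - 1)) / x ^ (1 + β))
    (hF : F = fun x => Real.exp (-α * (x ^ (-β) - 1))) :
    (∫ x in (0:ℝ)..1, x * (F x) ^ r * f x) =
      α ^ (1 / β) * ((r : ℝ) + 1) ^ (1 / β - 1) * Real.exp (((r : ℝ) + 1) * α) *
        uiGamma (1 - 1 / β) (((r : ℝ) + 1) * α) := by
  subst hf hF
  have hr : (0 : ℝ) < r + 1 := by positivity
  have hlhs : (∫ x in (0 : ℝ)..1, x * exp (-α * (x ^ (-β) - 1)) ^ r *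
      (α * β * exp (-α * (x ^ (-β) - 1)) / x ^ (1 + β))) =
      α * β * exp ((r + 1) * α) *
        ∫ x in Ioo 0 1, x ^ (-β) * exp (-((r + 1) * α * x ^ (-β))) := by
    rw [intervalIntegral.integral_of_le zero_le_one, integral_Ioc_eq_integral_Ioo,
      ← integral_const_mul]
    exact setIntegral_congr_fun measurableSet_Ioo fun x hx => unitGompertz_integrand_eq hx.1 r
  have hexp : -β * (1 - 1 / β) - 1 = -β := by field_simp; ring
  have hconst : α ^ (1 / β) * (r + 1 : ℝ) ^ (1 / β - 1) * ((r + 1) * α) ^ (1 - 1 / β) = α := by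
    calc α ^ (1 / β) * (r + 1 : ℝ) ^ (1 / β - 1) * ((r + 1) * α) ^ (1 - 1 / β)
        = α ^ (1 / β) * α ^ (1 - 1 / β) * ((r + 1 : ℝ) ^ (1 / β - 1) * (r + 1) ^ (1 - 1 / β)) := by
          rw [mul_rpow hr.le hα.le]; ring
      _ = α := by rw [← rpow_add hα, ← rpow_add hr]; norm_num
  rw [hlhs, uiGamma_eq_integral_Ioo _ hβ (by positivity), hexp]
  linear_combination (-(β * exp ((r + 1) * α) *
    ∫ x in Ioo 0 1, x ^ (-β) * exp (-((r + 1) * α * x ^ (-β))))) * hconst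
end

section
/- Let α > 0, β > 0, and γ > 0 with γ ≠ 1. Let f(x) = αβ·exp(−α(x^{−β} − 1))/x^{1+β} on (0,1). Then ∫_0^1 [f(x)]^γ dx = α^{(1−γ)/β}·β^{γ−1}·γ^{−(γ+βγ−1)/β}·e^{αγ}·Γ((γ+βγ−1)/β; αγ), where Γ(s; y) = ∫_y^∞ t^{s−1} e^{−t} dt. Consequently, the Tsallis entropy of the unit-Gompertz distribution is I_T(γ) = (1/(γ−1))·[1 − α^{(1−γ)/β}·β^{γ−1}·γ^{−(γ+βγ−1)/β}·e^{αγ}·Γ((γ+βγ−1)/β; αγ)]. -/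
open Real Set MeasureTheory

section MulRpowNeg

variable {c β : ℝ}

lemma image_mul_rpow_neg_Ioo_zero_one (hc : 0 < c) (hβ : 0 < β) :
    (fun x : ℝ => c * x ^ (-β)) '' Ioo 0 1 = Ioi c := by
  ext t
  constructor
  · rintro ⟨x, ⟨hx0, hx1⟩, rfl⟩
    have : 1 < x ^ (-β) := one_lt_rpow_of_pos_of_lt_one_of_neg hx0 hx1 (neg_neg_of_pos hβ)
    simpa using mul_lt_mul_of_pos_left this hc
  · intro ht
    have hq : 1 < t / c := (one_lt_div hc).2 ht
    refine ⟨(t / c) ^ (-β⁻¹), ⟨by positivity, ?_⟩, ?_⟩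
    · exact rpow_lt_one_of_one_lt_of_neg hq (neg_neg_of_pos (inv_pos.2 hβ))
    · dsimp only
      rw [← rpow_mul (by positivity), neg_mul_neg, inv_mul_cancel₀ hβ.ne', rpow_one]
      field_simp

lemma strictAntiOn_mul_rpow_neg (hc : 0 < c) (hβ : 0 < β) :
    StrictAntiOn (fun x : ℝ => c * x ^ (-β)) (Ioo 0 1) := fun _ hx _ _ hxy =>
  mul_lt_mul_of_pos_left (rpow_lt_rpow_of_neg hx.1 hxy (neg_neg_of_pos hβ)) hc

theorem integral_Ioi_eq_integral_Ioo_comp_mul_rpow_neg (hc : 0 < c) (hβ : 0 < β) (g : ℝ → ℝ) :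
    ∫ t in Ioi c, g t = ∫ x in Ioo 0 1, c * β * x ^ (-β - 1) * g (c * x ^ (-β)) := by
  have hderiv : ∀ x ∈ Ioo (0 : ℝ) 1, HasDerivWithinAt (fun x : ℝ => c * x ^ (-β))
      (c * (-β * x ^ (-β - 1))) (Ioo 0 1) x := fun x hx =>
    ((hasDerivAt_rpow_const (Or.inl hx.1.ne')).const_mul c).hasDerivWithinAt
  rw [← image_mul_rpow_neg_Ioo_zero_one hc hβ, integral_image_eq_integral_abs_deriv_smul
    measurableSet_Ioo hderiv (strictAntiOn_mul_rpow_neg hc hβ).injOn]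
  refine setIntegral_congr_fun measurableSet_Ioo fun x hx => ?_
  have : 0 < x ^ (-β - 1) := rpow_pos_of_pos hx.1 _
  rw [smul_eq_mul, abs_of_neg (by nlinarith [mul_pos hc (mul_pos hβ this)])]
  ring

end MulRpowNeg

lemma unitGompertz_density_rpow_eq {α β γ x : ℝ} (hα : 0 < α) (hβ : 0 < β) (hγ : 0 < γ)
    (hx : 0 < x) :
    (α * β * exp (-α * (x ^ (-β) - 1)) / x ^ (1 + β)) ^ γ =
      α ^ ((1 - γ) / β) * β ^ (γ - 1) * γ ^ (-((γ + β * γ - 1) / β)) * exp (α * γ) *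
        (α * γ * β * x ^ (-β - 1) *
          ((α * γ * x ^ (-β)) ^ ((γ + β * γ - 1) / β - 1) * exp (-(α * γ * x ^ (-β))))) := by
  refine log_injOn_pos (mem_Ioi.2 (by positivity)) (mem_Ioi.2 (by positivity)) ?_
  simp (disch := positivity) only [log_mul, log_div, log_rpow, log_exp]
  field_simp
  ring

theorem integral_unitGompertz_density_rpow {α β γ : ℝ} (hα : 0 < α) (hβ : 0 < β) (hγ : 0 < γ) :
    ∫ x in (0 : ℝ)..1, (α * β * exp (-α * (x ^ (-β) - 1)) / x ^ (1 + β)) ^ γ =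
      α ^ ((1 - γ) / β) * β ^ (γ - 1) * γ ^ (-((γ + β * γ - 1) / β)) * exp (α * γ) *
        uiGamma ((γ + β * γ - 1) / β) (α * γ) := by
  rw [intervalIntegral.integral_of_le zero_le_one, integral_Ioc_eq_integral_Ioo, uiGamma,
    integral_Ioi_eq_integral_Ioo_comp_mul_rpow_neg (mul_pos hα hγ) hβ, ← integral_const_mul]
  exact setIntegral_congr_fun measurableSet_Ioo fun x hx =>
    unitGompertz_density_rpow_eq hα hβ hγ hx.1

theorem unitGompertz_tsallis_entropy_general (α β γ : ℝ) (hα : 0 < α) (hβ : 0 < β)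
    (hγ : 0 < γ)
    (f : ℝ → ℝ)
    (hf : f = fun x => α * β * Real.exp (-α * (x ^ (-β) - 1)) / x ^ (1 + β)) :
    (∫ x in (0:ℝ)..1, (f x) ^ γ) =
      α ^ ((1 - γ) / β) * β ^ (γ - 1) * γ ^ (-((γ + β * γ - 1) / β)) *
        Real.exp (α * γ) * uiGamma ((γ + β * γ - 1) / β) (α * γ) ∧
    1 / (γ - 1) * (1 - ∫ x in (0:ℝ)..1, (f x) ^ γ) =
      1 / (γ - 1) *
        (1 - α ^ ((1 - γ) / β) * β ^ (γ - 1) * γ ^ (-((γ + β * γ - 1) / β)) *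
          Real.exp (α * γ) * uiGamma ((γ + β * γ - 1) / β) (α * γ)) := by
  subst hf
  have hpow := integral_unitGompertz_density_rpow hα hβ hγ
  exact ⟨hpow, by rw [hpow]⟩

/-- **Tsallis entropy of the unit-Gompertz distribution.**
For `α, β > 0` and `0 < γ ≠ 1`, with density
`f x = α * β * exp (-α * (x ^ (-β) - 1)) / x ^ (1 + β)` on `(0, 1)`, one has
`∫_0^1 (f x)^γ dx
  = α^((1-γ)/β) * β^(γ-1) * γ^(-(γ+βγ-1)/β) * e^(αγ) * Γ((γ+βγ-1)/β; αγ)`,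
and consequently the Tsallis entropy is
`I_T(γ) = (1/(γ-1)) * (1 - ∫_0^1 (f x)^γ dx)` with the integral given by this
closed-form expression. -/
theorem unitGompertz_tsallis_entropy (α β γ : ℝ) (hα : 0 < α) (hβ : 0 < β)
    (hγ : 0 < γ) (hγ1 : γ ≠ 1)
    (f : ℝ → ℝ)
    (hf : f = fun x => α * β * Real.exp (-α * (x ^ (-β) - 1)) / x ^ (1 + β)) :
    (∫ x in (0:ℝ)..1, (f x) ^ γ) =
      α ^ ((1 - γ) / β) * β ^ (γ - 1) * γ ^ (-((γ + β * γ - 1) / β)) *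
        Real.exp (α * γ) * uiGamma ((γ + β * γ - 1) / β) (α * γ) ∧
    1 / (γ - 1) * (1 - ∫ x in (0:ℝ)..1, (f x) ^ γ) =
      1 / (γ - 1) *
        (1 - α ^ ((1 - γ) / β) * β ^ (γ - 1) * γ ^ (-((γ + β * γ - 1) / β)) *
          Real.exp (α * γ) * uiGamma ((γ + β * γ - 1) / β) (α * γ)) :=
  unitGompertz_tsallis_entropy_general α β γ hα hβ hγ f hf
end

section
/- Let α > 0, β > 0, and let γ < 2 with γ ≠ 1. Let f(x) = αβ·exp(−α(x^{−β} − 1))/x^{1+β} on (0,1). Then ∫_0^1 [f(x)]^{2−γ} dx = α^{(γ−1)/β}·β^{1−γ}·(2−γ)^{−((2−γ)+β(2−γ)−1)/β}·e^{α(2−γ)}·Γ(((1+β)(1−γ))/β + 1; α(2−γ)), where Γ(s; y) = ∫_y^∞ t^{s−1} e^{−t} dt. Consequently, the Mathai–Haubold entropy of the unit-Gompertz distribution is I_MH(γ) = (1/(γ−1))·[∫_0^1 [f(x)]^{2−γ} dx − 1] with the integral given by the above closed-form expression. -/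
open MeasureTheory Set Real

theorem integral_Ioi_rpow_mul_exp_neg_mul {a c : ℝ} (ha : 0 ≤ a) (hc : 0 < c) (s : ℝ) :
    ∫ u in Ioi a, u ^ (s - 1) * exp (-(c * u)) = c ^ (-s) * uiGamma s (c * a) := by
  have hscale : ∀ u ∈ Ioi a, (c * u) ^ (s - 1) * exp (-(c * u)) =
      c ^ (s - 1) * (u ^ (s - 1) * exp (-(c * u))) := fun u hu => by
    rw [mul_rpow hc.le (ha.trans hu.out.le), mul_assoc]
  have h := integral_comp_mul_left_Ioi (fun t => t ^ (s - 1) * exp (-t)) a hc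
  rw [setIntegral_congr_fun measurableSet_Ioi hscale, integral_const_mul, smul_eq_mul] at h
  have hpow : c ^ (-s) = (c ^ (s - 1))⁻¹ * c⁻¹ := by
    rw [← rpow_neg hc.le, ← rpow_neg_one, ← rpow_add hc]
    ring_nf
  rw [hpow, mul_assoc, uiGamma, ← h, inv_mul_cancel_left₀ (rpow_pos_of_pos hc _).ne']

theorem image_rpow_Ioo_zero_one_of_neg {r : ℝ} (hr : r < 0) :
    (fun x : ℝ => x ^ r) '' Ioo 0 1 = Ioi 1 := by
  ext u
  constructor
  · rintro ⟨x, ⟨hx0, hx1⟩, rfl⟩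
    exact (one_lt_rpow_iff_of_pos hx0).mpr (Or.inr ⟨hx1, hr⟩)
  · intro hu
    have hu0 : 0 < u := one_pos.trans hu
    refine ⟨u ^ r⁻¹, ⟨rpow_pos_of_pos hu0 _, rpow_lt_one_of_one_lt_of_neg hu (inv_lt_zero.mpr hr)⟩, ?_⟩
    show (u ^ r⁻¹) ^ r = u
    rw [← rpow_mul hu0.le, inv_mul_cancel₀ hr.ne, rpow_one]

theorem integral_Ioo_zero_one_comp_rpow_neg {β : ℝ} (hβ : 0 < β) (g : ℝ → ℝ) :
    ∫ x in Ioo 0 1, β * x ^ (-β - 1) * g (x ^ (-β)) = ∫ u in Ioi 1, g u := by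
  have hinj : InjOn (fun x : ℝ => x ^ (-β)) (Ioo 0 1) :=
    (rpow_left_injOn (neg_ne_zero.mpr hβ.ne')).mono fun x hx => hx.1.le
  rw [← image_rpow_Ioo_zero_one_of_neg (neg_lt_zero.mpr hβ),
    integral_image_eq_integral_abs_deriv_smul measurableSet_Ioo
      (fun x hx => (hasDerivAt_rpow_const (Or.inl hx.1.ne')).hasDerivWithinAt) hinj]
  refine setIntegral_congr_fun measurableSet_Ioo fun x hx => ?_
  rw [smul_eq_mul, abs_mul, abs_neg, abs_of_pos hβ, abs_of_pos (rpow_pos_of_pos hx.1 _)]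

noncomputable def unitGompertzPDF (α β x : ℝ) : ℝ :=
  α * β * exp (-α * (x ^ (-β) - 1)) / x ^ (1 + β)

theorem unitGompertzPDF_rpow {α β : ℝ} (hα : 0 < α) (hβ : 0 < β) (q : ℝ) {x : ℝ} (hx : 0 < x) :
    unitGompertzPDF α β x ^ q = α ^ q * β ^ (q - 1) * exp (α * q) *
      (β * x ^ (-β - 1) *
        ((x ^ (-β)) ^ ((q + β * q - 1) / β - 1) * exp (-(α * q * x ^ (-β))))) := by
  have hexp : exp (-α * (x ^ (-β) - 1)) ^ q = exp (α * q) * exp (-(α * q * x ^ (-β))) := by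
    rw [← exp_mul, ← exp_add]
    ring_nf
  have hxpow : (x ^ (1 + β))⁻¹ ^ q = x ^ (-β - 1) * (x ^ (-β)) ^ ((q + β * q - 1) / β - 1) := by
    rw [← rpow_neg hx.le, ← rpow_mul hx.le, ← rpow_mul hx.le, ← rpow_add hx]
    congr 1
    field_simp
    ring
  have hβpow : β ^ q = β ^ (q - 1) * β := by
    rw [← rpow_add_one hβ.ne', sub_add_cancel]
  rw [unitGompertzPDF, div_eq_mul_inv, mul_rpow (by positivity) (by positivity),
    mul_rpow (by positivity) (by positivity), mul_rpow hα.le hβ.le, hexp, hxpow, hβpow]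
  ring

theorem integral_unitGompertzPDF_rpow {α β q : ℝ} (hα : 0 < α) (hβ : 0 < β) (hq : 0 < q) :
    ∫ x in (0 : ℝ)..1, unitGompertzPDF α β x ^ q =
      α ^ ((1 - q) / β) * β ^ (q - 1) * q ^ (-((q + β * q - 1) / β)) * exp (α * q) *
        uiGamma ((q + β * q - 1) / β) (α * q) := by
  set s := (q + β * q - 1) / β
  have hαpow : α ^ q * α ^ (-s) = α ^ ((1 - q) / β) := by
    rw [← rpow_add hα]
    congr 1
    simp only [s]
    field_simp
    ring
  calc ∫ x in (0 : ℝ)..1, unitGompertzPDF α β x ^ q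
      = α ^ q * β ^ (q - 1) * exp (α * q) *
          ∫ x in Ioo 0 1, β * x ^ (-β - 1) *
            ((x ^ (-β)) ^ (s - 1) * exp (-(α * q * x ^ (-β)))) := by
        rw [intervalIntegral.integral_of_le zero_le_one, integral_Ioc_eq_integral_Ioo,
          ← integral_const_mul]
        exact setIntegral_congr_fun measurableSet_Ioo fun x hx =>
          unitGompertzPDF_rpow hα hβ q hx.1
    _ = α ^ q * β ^ (q - 1) * exp (α * q) * ((α * q) ^ (-s) * uiGamma s (α * q)) := by
        rw [integral_Ioo_zero_one_comp_rpow_neg hβ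
            (fun u => u ^ (s - 1) * exp (-(α * q * u))),
          integral_Ioi_rpow_mul_exp_neg_mul zero_le_one (mul_pos hα hq), mul_one]
    _ = α ^ ((1 - q) / β) * β ^ (q - 1) * q ^ (-s) * exp (α * q) * uiGamma s (α * q) := by
        rw [mul_rpow hα.le hq.le, ← hαpow]
        ring

theorem unitGompertz_mathai_haubold_entropy_general (α β γ : ℝ) (hα : 0 < α) (hβ : 0 < β)
    (hγ2 : γ < 2)
    (f : ℝ → ℝ)
    (hf : f = fun x => α * β * Real.exp (-α * (x ^ (-β) - 1)) / x ^ (1 + β)) :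
    (∫ x in (0:ℝ)..1, (f x) ^ (2 - γ)) =
      α ^ ((γ - 1) / β) * β ^ (1 - γ) *
        (2 - γ) ^ (-(((2 - γ) + β * (2 - γ) - 1) / β)) * Real.exp (α * (2 - γ)) *
        uiGamma ((1 + β) * (1 - γ) / β + 1) (α * (2 - γ)) ∧
    1 / (γ - 1) * ((∫ x in (0:ℝ)..1, (f x) ^ (2 - γ)) - 1) =
      1 / (γ - 1) *
        (α ^ ((γ - 1) / β) * β ^ (1 - γ) *
            (2 - γ) ^ (-(((2 - γ) + β * (2 - γ) - 1) / β)) * Real.exp (α * (2 - γ)) *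
            uiGamma ((1 + β) * (1 - γ) / β + 1) (α * (2 - γ)) - 1) := by
  have hf' : f = unitGompertzPDF α β := hf
  have hgamma : (1 + β) * (1 - γ) / β + 1 = ((2 - γ) + β * (2 - γ) - 1) / β := by
    field_simp
    ring
  have key : ∫ x in (0:ℝ)..1, (f x) ^ (2 - γ) =
      α ^ ((γ - 1) / β) * β ^ (1 - γ) *
        (2 - γ) ^ (-(((2 - γ) + β * (2 - γ) - 1) / β)) * Real.exp (α * (2 - γ)) *
        uiGamma ((1 + β) * (1 - γ) / β + 1) (α * (2 - γ)) := by
    rw [hf', integral_unitGompertzPDF_rpow hα hβ (sub_pos.mpr hγ2), hgamma]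
    ring_nf
  exact ⟨key, by rw [key]⟩

/-- **Mathai–Haubold entropy of the unit-Gompertz distribution.**
For `α, β > 0` and `γ < 2` with `γ ≠ 1`, with density
`f x = α * β * exp (-α * (x ^ (-β) - 1)) / x ^ (1 + β)` on `(0, 1)`, one has
`∫_0^1 (f x)^(2-γ) dx
  = α^((γ-1)/β) * β^(1-γ) * (2-γ)^(-((2-γ)+β(2-γ)-1)/β) * e^(α(2-γ))
      * Γ((1+β)(1-γ)/β + 1; α(2-γ))`,
and consequently the Mathai–Haubold entropy is
`I_MH(γ) = (1/(γ-1)) * (∫_0^1 (f x)^(2-γ) dx - 1)` with the integral given by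
this closed-form expression. -/
theorem unitGompertz_mathai_haubold_entropy (α β γ : ℝ) (hα : 0 < α) (hβ : 0 < β)
    (hγ2 : γ < 2) (hγ1 : γ ≠ 1)
    (f : ℝ → ℝ)
    (hf : f = fun x => α * β * Real.exp (-α * (x ^ (-β) - 1)) / x ^ (1 + β)) :
    (∫ x in (0:ℝ)..1, (f x) ^ (2 - γ)) =
      α ^ ((γ - 1) / β) * β ^ (1 - γ) *
        (2 - γ) ^ (-(((2 - γ) + β * (2 - γ) - 1) / β)) * Real.exp (α * (2 - γ)) *
        uiGamma ((1 + β) * (1 - γ) / β + 1) (α * (2 - γ)) ∧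
    1 / (γ - 1) * ((∫ x in (0:ℝ)..1, (f x) ^ (2 - γ)) - 1) =
      1 / (γ - 1) *
        (α ^ ((γ - 1) / β) * β ^ (1 - γ) *
            (2 - γ) ^ (-(((2 - γ) + β * (2 - γ) - 1) / β)) * Real.exp (α * (2 - γ)) *
            uiGamma ((1 + β) * (1 - γ) / β + 1) (α * (2 - γ)) - 1) :=
  unitGompertz_mathai_haubold_entropy_general α β γ hα hβ hγ2 f hf
end
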